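/- Every Cygan ball is affinely convex: for every ζ₀ ∈ ℂ, t₀ ∈ ℝ and every s > 0, the open Cygan ball B((ζ₀,t₀), s) = {(ζ,t) ∈ ℂ×ℝ : | |ζ−ζ₀|² + i(t−t₀) + 2i·Im(ζ·conj(ζ₀)) | < s} is a convex subset of the real vector space ℂ×ℝ ≅ ℝ³, and likewise the closed Cygan ball {(ζ,t) ∈ ℂ×ℝ : | |ζ−ζ₀|² + i(t−t₀) + 2i·Im(ζ·conj(ζ₀)) | ≤ s} is convex. -/

import Mathlib

/-!
The Cygan expression is `f + g i` with real part `f p = ‖p.1 - ζ₀‖²` convex and nonnegative and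
imaginary part `g` affine in `p`. Along a segment `g` interpolates exactly while `f` lies below its
chord; as the modulus of a complex number with fixed imaginary part grows with its nonnegative real
part, the modulus at a convex combination is at most that of the combination of the values, hence,
by the triangle inequality, at most the combination of the moduli. So the Cygan gauge is convex and
its sublevel sets, the Cygan balls, are convex.
-/

noncomputable section

open Complex

/-- The open Cygan ball of squared radius `s` centred at `(ζ₀, t₀)` in the Heisenberg
group `ℂ × ℝ`:  `{(ζ,t) : | |ζ−ζ₀|² + i(t−t₀) + 2i·Im(ζ·conj ζ₀) | < s}`. -/
def cyganBall (ζ₀ : ℂ) (t₀ : ℝ) (s : ℝ) : Set (ℂ × ℝ) :=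
  {p | ‖((‖p.1 - ζ₀‖ ^ 2 : ℝ) : ℂ)
        + Complex.I * ((p.2 - t₀ : ℝ) : ℂ)
        + 2 * Complex.I * (((p.1 * (starRingEnd ℂ) ζ₀).im : ℝ) : ℂ)‖ < s}

/-- The corresponding closed Cygan ball. -/
def closedCyganBall (ζ₀ : ℂ) (t₀ : ℝ) (s : ℝ) : Set (ℂ × ℝ) :=
  {p | ‖((‖p.1 - ζ₀‖ ^ 2 : ℝ) : ℂ)
        + Complex.I * ((p.2 - t₀ : ℝ) : ℂ)
        + 2 * Complex.I * (((p.1 * (starRingEnd ℂ) ζ₀).im : ℝ) : ℂ)‖ ≤ s}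

lemma norm_ofReal_add_mul_I_le_of_le {x x' : ℝ} (y : ℝ) (hx : 0 ≤ x) (hxx' : x ≤ x') :
    ‖(x : ℂ) + y * I‖ ≤ ‖(x' : ℂ) + y * I‖ := by
  rw [norm_add_mul_I, norm_add_mul_I]
  gcongr

theorem ConvexOn.norm_ofReal_add_mul_I {E : Type*} [AddCommGroup E] [Module ℝ E] {s : Set E}
    {f : E → ℝ} (hf : ConvexOn ℝ s f) (hf₀ : ∀ x ∈ s, 0 ≤ f x) (g : E →ᵃ[ℝ] ℝ) :
    ConvexOn ℝ s (fun x ↦ ‖(f x : ℂ) + g x * I‖) := by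
  refine ⟨hf.1, fun x hx y hy a b ha hb hab ↦ ?_⟩
  calc ‖(f (a • x + b • y) : ℂ) + g (a • x + b • y) * I‖
      ≤ ‖((a * f x + b * f y : ℝ) : ℂ) + ((a * g x + b * g y : ℝ) : ℂ) * I‖ := by
        rw [Convex.combo_affine_apply hab, smul_eq_mul, smul_eq_mul]
        exact norm_ofReal_add_mul_I_le_of_le _ (hf₀ _ (hf.1 hx hy ha hb hab))
          (hf.2 hx hy ha hb hab)
    _ = ‖(a : ℂ) * (f x + g x * I) + (b : ℂ) * (f y + g y * I)‖ := by
        push_cast; ring_nf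
    _ ≤ a * ‖(f x : ℂ) + g x * I‖ + b * ‖(f y : ℂ) + g y * I‖ := by
        refine (norm_add_le _ _).trans_eq ?_
        simp only [norm_mul, norm_real, Real.norm_of_nonneg ha, Real.norm_of_nonneg hb]

def cyganHeight (ζ₀ : ℂ) (t₀ : ℝ) : ℂ × ℝ →ᵃ[ℝ] ℝ :=
  (LinearMap.snd ℝ ℂ ℝ + (2 : ℝ) • (imLm ∘ₗ LinearMap.mulRight ℝ (starRingEnd ℂ ζ₀) ∘ₗ
    LinearMap.fst ℝ ℂ ℝ)).toAffineMap - AffineMap.const ℝ _ t₀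

lemma cyganHeight_apply (ζ₀ : ℂ) (t₀ : ℝ) (p : ℂ × ℝ) :
    cyganHeight ζ₀ t₀ p = p.2 - t₀ + 2 * (p.1 * (starRingEnd ℂ) ζ₀).im := by
  change p.2 + 2 * (p.1 * (starRingEnd ℂ) ζ₀).im - t₀ = _
  ring

def cyganGauge (ζ₀ : ℂ) (t₀ : ℝ) (p : ℂ × ℝ) : ℝ :=
  ‖((‖p.1 - ζ₀‖ ^ 2 : ℝ) : ℂ) + cyganHeight ζ₀ t₀ p * I‖

lemma cyganGauge_eq (ζ₀ : ℂ) (t₀ : ℝ) (p : ℂ × ℝ) :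
    cyganGauge ζ₀ t₀ p = ‖((‖p.1 - ζ₀‖ ^ 2 : ℝ) : ℂ)
        + Complex.I * ((p.2 - t₀ : ℝ) : ℂ)
        + 2 * Complex.I * (((p.1 * (starRingEnd ℂ) ζ₀).im : ℝ) : ℂ)‖ := by
  rw [cyganGauge, cyganHeight_apply]
  push_cast
  ring_nf

lemma cyganBall_eq (ζ₀ : ℂ) (t₀ s : ℝ) : cyganBall ζ₀ t₀ s = {p | cyganGauge ζ₀ t₀ p < s} := by
  simp only [cyganBall, cyganGauge_eq]

lemma closedCyganBall_eq (ζ₀ : ℂ) (t₀ s : ℝ) :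
    closedCyganBall ζ₀ t₀ s = {p | cyganGauge ζ₀ t₀ p ≤ s} := by
  simp only [closedCyganBall, cyganGauge_eq]

lemma convexOn_cyganGauge (ζ₀ : ℂ) (t₀ : ℝ) : ConvexOn ℝ Set.univ (cyganGauge ζ₀ t₀) := by
  have hdist : ConvexOn ℝ Set.univ fun p : ℂ × ℝ ↦ ‖p.1 - ζ₀‖ :=
    convexOn_univ_norm.comp_affineMap
      ((LinearMap.fst ℝ ℂ ℝ).toAffineMap - AffineMap.const ℝ (ℂ × ℝ) ζ₀)
  exact (hdist.pow (fun _ _ ↦ norm_nonneg _) 2).norm_ofReal_add_mul_I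
    (fun _ _ ↦ sq_nonneg _) (cyganHeight ζ₀ t₀)

theorem cyganBall_convex_general (ζ₀ : ℂ) (t₀ : ℝ) (s : ℝ) :
    Convex ℝ (cyganBall ζ₀ t₀ s) ∧ Convex ℝ (closedCyganBall ζ₀ t₀ s) := by
  rw [cyganBall_eq, closedCyganBall_eq]
  exact ⟨by simpa using (convexOn_cyganGauge ζ₀ t₀).convex_lt s,
    by simpa using (convexOn_cyganGauge ζ₀ t₀).convex_le s⟩

/-- **All Cygan balls are affinely convex** (Lemma 4.1 of the paper, quoted from
Falbel–Francsics–Parker): every open Cygan ball, and every closed Cygan ball, is a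
convex subset of the real vector space `ℂ × ℝ ≅ ℝ³`. -/
theorem cyganBall_convex (ζ₀ : ℂ) (t₀ : ℝ) (s : ℝ) (hs : 0 < s) :
    Convex ℝ (cyganBall ζ₀ t₀ s) ∧ Convex ℝ (closedCyganBall ζ₀ t₀ s) :=
  cyganBall_convex_general ζ₀ t₀ s

end
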